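/- arXiv:1204.1613 — 5 statements merged into one kernel-verified Lean document; each statement's English description precedes it below -/
import Mathlib

section
/- In the real Heisenberg group H_3(ℝ) with coordinates (x,y,z) and group law (x,y,z)·(x',y',z') = (x+x', y+y', z+z'+ (xy'-yx')/2), the subFinsler distance d_3 from the identity, associated to the ℓ¹ norm |x|+|y| on the horizontal plane, satisfies d_3(id,(x,y,z)) = |x|+|y| whenever |z| ≤ |xy|/2. -/
/-!
Every horizontal path ending at `(x, y, z)` has `∫ u = x` and `∫ v = y`, so its ℓ¹ length is at
least `|x| + |y|`. Conversely, the staircase path that moves by `a` along `X`, then by `y` along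
`Y`, then by `b` along `X` ends at `(a + b, y, y (a - b) / 2)` and has length `|a| + |y| + |b|`;
when `|z| ≤ |x y| / 2` one can take `a + b = x` with `a, b` of the same sign and
`y (a - b) / 2 = z`. The corners of the staircase are smoothed by `Real.smoothTransition`, so that
the controls are continuous.
-/

/-- The subFinsler (Carnot–Carathéodory) distance from the identity in the
Heisenberg group `H₃(ℝ)`, in exponential coordinates `(x,y,z)` with `[X,Y] = Z`,
associated to the ℓ¹ norm `|a| + |b|` on horizontal vectors `aX + bY`.
A horizontal path is encoded by coordinate functions `x y z : ℝ → ℝ` with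
controls `u v` (the horizontal velocities), the constraint on `z` being
`z' = (x v - y u)/2`, and its length is `∫ (|u| + |v|)`. -/
noncomputable def d3 : ℝ × ℝ × ℝ → ℝ := fun p =>
  sInf { L : ℝ | ∃ x y z u v : ℝ → ℝ,
    x 0 = 0 ∧ y 0 = 0 ∧ z 0 = 0 ∧
    x 1 = p.1 ∧ y 1 = p.2.1 ∧ z 1 = p.2.2 ∧
    ContinuousOn u (Set.Icc 0 1) ∧ ContinuousOn v (Set.Icc 0 1) ∧
    (∀ t ∈ Set.Icc (0:ℝ) 1, HasDerivAt x (u t) t ∧ HasDerivAt y (v t) t ∧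
        HasDerivAt z ((x t * v t - y t * u t) / 2) t) ∧
    L = ∫ t in (0:ℝ)..1, (|u t| + |v t|) }

/-- Group law of `H₃(ℝ)` in exponential coordinates:
`(x,y,z)·(x',y',z') = (x+x', y+y', z+z'+(xy'-yx')/2)`. -/
noncomputable def hMul (p q : ℝ × ℝ × ℝ) : ℝ × ℝ × ℝ :=
  (p.1 + q.1, p.2.1 + q.2.1, p.2.2 + q.2.2 + (p.1 * q.2.1 - p.2.1 * q.1) / 2)

/-- Inverse in `H₃(ℝ)` in exponential coordinates. -/
noncomputable def hInv (p : ℝ × ℝ × ℝ) : ℝ × ℝ × ℝ := (-p.1, -p.2.1, -p.2.2)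

/-- The left-invariant subFinsler distance `d₃` on `H₃(ℝ)`. -/
noncomputable def d3dist (p q : ℝ × ℝ × ℝ) : ℝ := d3 (hMul (hInv p) q)

open Real Set intervalIntegral

def horizontalLengths (p : ℝ × ℝ × ℝ) : Set ℝ :=
  { L : ℝ | ∃ x y z u v : ℝ → ℝ,
    x 0 = 0 ∧ y 0 = 0 ∧ z 0 = 0 ∧
    x 1 = p.1 ∧ y 1 = p.2.1 ∧ z 1 = p.2.2 ∧
    ContinuousOn u (Icc 0 1) ∧ ContinuousOn v (Icc 0 1) ∧
    (∀ t ∈ Icc (0:ℝ) 1, HasDerivAt x (u t) t ∧ HasDerivAt y (v t) t ∧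
        HasDerivAt z ((x t * v t - y t * u t) / 2) t) ∧
    L = ∫ t in (0:ℝ)..1, (|u t| + |v t|) }

theorem d3_eq_sInf_horizontalLengths (p : ℝ × ℝ × ℝ) : d3 p = sInf (horizontalLengths p) := rfl

theorem abs_sub_le_integral_abs_of_hasDerivAt {f u : ℝ → ℝ} {a b : ℝ} (hab : a ≤ b)
    (hu : ContinuousOn u (Icc a b)) (hf : ∀ t ∈ Icc a b, HasDerivAt f (u t) t) :
    |f b - f a| ≤ ∫ t in a..b, |u t| := by
  rw [← integral_eq_sub_of_hasDerivAt (by rwa [uIcc_of_le hab])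
    (hu.intervalIntegrable_of_Icc hab)]
  exact abs_integral_le_integral_abs hab

theorem abs_add_abs_le_of_mem_horizontalLengths {p : ℝ × ℝ × ℝ} {L : ℝ}
    (hL : L ∈ horizontalLengths p) : |p.1| + |p.2.1| ≤ L := by
  obtain ⟨x, y, z, u, v, hx0, hy0, -, hx1, hy1, -, hu, hv, hderiv, rfl⟩ := hL
  have hxu := abs_sub_le_integral_abs_of_hasDerivAt zero_le_one hu fun t ht => (hderiv t ht).1
  have hyv := abs_sub_le_integral_abs_of_hasDerivAt zero_le_one hv fun t ht => (hderiv t ht).2.1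
  rw [hx0, hx1, sub_zero] at hxu
  rw [hy0, hy1, sub_zero] at hyv
  rw [integral_add (hu.abs.intervalIntegrable_of_Icc zero_le_one)
    (hv.abs.intervalIntegrable_of_Icc zero_le_one)]
  exact add_le_add hxu hyv

theorem deriv_smoothTransition_eq_zero {r : ℝ} (hr : r ≤ 0 ∨ 1 ≤ r) :
    deriv smoothTransition r = 0 := by
  rcases hr with hr | hr
  · refine IsLocalMin.deriv_eq_zero
      (IsMinOn.isLocalMin (s := univ) (fun s _ => ?_) Filter.univ_mem)
    exact (smoothTransition.zero_of_nonpos hr).trans_le (smoothTransition.nonneg s)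
  · refine IsLocalMax.deriv_eq_zero
      (IsMaxOn.isLocalMax (s := univ) (fun s _ => ?_) Filter.univ_mem)
    exact (smoothTransition.le_one s).trans_eq (smoothTransition.one_of_one_le hr).symm

/-- `stairStep c` climbs from `0` to `1` on the time interval `[c / 3, (c + 1) / 3]`. -/
noncomputable def stairStep (c t : ℝ) : ℝ := smoothTransition (3 * t - c)

noncomputable def stairStepDeriv (c t : ℝ) : ℝ := 3 * deriv smoothTransition (3 * t - c)

section stairStep

variable {c c' : ℝ}

theorem hasDerivAt_stairStep (c t : ℝ) : HasDerivAt (stairStep c) (stairStepDeriv c t) t := by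
  have hlin : HasDerivAt (fun t : ℝ => 3 * t - c) 3 t := by
    simpa using ((hasDerivAt_id t).const_mul 3).sub_const c
  have hst := ((smoothTransition.contDiff (n := 1)).differentiable one_ne_zero
    (3 * t - c)).hasDerivAt
  rw [stairStepDeriv, mul_comm]
  exact hst.comp t hlin

theorem continuous_stairStepDeriv (c : ℝ) : Continuous (stairStepDeriv c) :=
  continuous_const.mul (((smoothTransition.contDiff (n := 1)).continuous_deriv le_rfl).comp
    (by fun_prop))

theorem stairStepDeriv_nonneg (c t : ℝ) : 0 ≤ stairStepDeriv c t :=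
  mul_nonneg zero_le_three smoothTransition.monotone.deriv_nonneg

theorem stairStep_zero (hc : 0 ≤ c) : stairStep c 0 = 0 :=
  smoothTransition.zero_of_nonpos (by linarith)

theorem stairStep_one (hc : c ≤ 2) : stairStep c 1 = 1 :=
  smoothTransition.one_of_one_le (by linarith)

theorem integral_stairStepDeriv (hc₀ : 0 ≤ c) (hc₂ : c ≤ 2) :
    ∫ t in (0:ℝ)..1, stairStepDeriv c t = 1 := by
  rw [integral_eq_sub_of_hasDerivAt (fun t _ => hasDerivAt_stairStep c t)
    ((continuous_stairStepDeriv c).intervalIntegrable 0 1), stairStep_one hc₂,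
    stairStep_zero hc₀, sub_zero]

theorem stairStepDeriv_eq_zero {t : ℝ} (ht : 3 * t - c ≤ 0 ∨ 1 ≤ 3 * t - c) :
    stairStepDeriv c t = 0 := by
  rw [stairStepDeriv, deriv_smoothTransition_eq_zero ht, mul_zero]

theorem stairStep_mul_stairStepDeriv_eq_self (h : c + 1 ≤ c') (t : ℝ) :
    stairStep c t * stairStepDeriv c' t = stairStepDeriv c' t := by
  rcases le_or_gt (3 * t - c') 0 with ht | ht
  · rw [stairStepDeriv_eq_zero (.inl ht), mul_zero]
  · rw [stairStep, smoothTransition.one_of_one_le (by linarith), one_mul]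

theorem stairStep_mul_stairStepDeriv_eq_zero (h : c' + 1 ≤ c) (t : ℝ) :
    stairStep c t * stairStepDeriv c' t = 0 := by
  rcases le_or_gt 1 (3 * t - c') with ht | ht
  · rw [stairStepDeriv_eq_zero (.inr ht), mul_zero]
  · rw [stairStep, smoothTransition.zero_of_nonpos (by linarith), zero_mul]

theorem stairStepDeriv_mul_stairStepDeriv_eq_zero (h : c + 1 ≤ c') (t : ℝ) :
    stairStepDeriv c t * stairStepDeriv c' t = 0 := by
  rcases le_or_gt (3 * t - c') 0 with ht | ht
  · rw [stairStepDeriv_eq_zero (.inl ht), mul_zero]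
  · rw [stairStepDeriv_eq_zero (.inr (by linarith)), zero_mul]

end stairStep

theorem abs_mul_add_mul_of_mul_eq_zero {p q : ℝ} (hp : 0 ≤ p) (hq : 0 ≤ q) (hpq : p * q = 0)
    (a b : ℝ) : |a * p + b * q| = |a| * p + |b| * q := by
  rcases mul_eq_zero.1 hpq with rfl | rfl <;> simp [abs_mul, abs_of_nonneg, hp, hq]

theorem integral_staircase_length (a b y : ℝ) :
    ∫ t in (0:ℝ)..1, (|a * stairStepDeriv 0 t + b * stairStepDeriv 2 t| +
      |y * stairStepDeriv 1 t|) = |a| + |b| + |y| := by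
  have hu (t : ℝ) : |a * stairStepDeriv 0 t + b * stairStepDeriv 2 t| =
      |a| * stairStepDeriv 0 t + |b| * stairStepDeriv 2 t :=
    abs_mul_add_mul_of_mul_eq_zero (stairStepDeriv_nonneg 0 t) (stairStepDeriv_nonneg 2 t)
      (stairStepDeriv_mul_stairStepDeriv_eq_zero (by norm_num) t) a b
  have hv (t : ℝ) : |y * stairStepDeriv 1 t| = |y| * stairStepDeriv 1 t := by
    rw [abs_mul, abs_of_nonneg (stairStepDeriv_nonneg 1 t)]
  have hint (c k : ℝ) :
      IntervalIntegrable (fun t => k * stairStepDeriv c t) MeasureTheory.volume 0 1 :=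
    (continuous_const.mul (continuous_stairStepDeriv c)).intervalIntegrable 0 1
  simp only [hu, hv]
  rw [integral_add ((hint 0 |a|).add (hint 2 |b|)) (hint 1 |y|),
    integral_add (hint 0 |a|) (hint 2 |b|), integral_const_mul, integral_const_mul,
    integral_const_mul, integral_stairStepDeriv le_rfl zero_le_two,
    integral_stairStepDeriv zero_le_two le_rfl, integral_stairStepDeriv zero_le_one one_le_two]
  ring

theorem staircase_mem_horizontalLengths (a b y : ℝ) :
    |a| + |b| + |y| ∈ horizontalLengths (a + b, y, y * (a - b) / 2) := by
  refine ⟨fun t => a * stairStep 0 t + b * stairStep 2 t, fun t => y * stairStep 1 t,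
    fun t => (a * y * stairStep 1 t - b * y * stairStep 2 t) / 2,
    fun t => a * stairStepDeriv 0 t + b * stairStepDeriv 2 t, fun t => y * stairStepDeriv 1 t,
    ?_, ?_, ?_, ?_, ?_, ?_, ?_, ?_, ?_, ?_⟩
  iterate 3 norm_num [stairStep_zero]
  iterate 2 norm_num [stairStep_one]
  · norm_num [stairStep_one]; ring
  · exact (continuous_const.mul (continuous_stairStepDeriv 0)).add
      (continuous_const.mul (continuous_stairStepDeriv 2)) |>.continuousOn
  · exact (continuous_const.mul (continuous_stairStepDeriv 1)).continuousOn
  · intro t _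
    refine ⟨((hasDerivAt_stairStep 0 t).const_mul a).add ((hasDerivAt_stairStep 2 t).const_mul b),
      (hasDerivAt_stairStep 1 t).const_mul y, ?_⟩
    refine (((hasDerivAt_stairStep 1 t).const_mul (a * y)).sub
      ((hasDerivAt_stairStep 2 t).const_mul (b * y))).div_const 2 |>.congr_deriv ?_
    have h01 := stairStep_mul_stairStepDeriv_eq_self (c := 0) (c' := 1) (by norm_num) t
    have h21 := stairStep_mul_stairStepDeriv_eq_zero (c := 2) (c' := 1) (by norm_num) t
    have h10 := stairStep_mul_stairStepDeriv_eq_zero (c := 1) (c' := 0) (by norm_num) t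
    have h12 := stairStep_mul_stairStepDeriv_eq_self (c := 1) (c' := 2) (by norm_num) t
    linear_combination (a * y / 2) * (h10 - h01) + (b * y / 2) * (h12 - h21)
  · exact (integral_staircase_length a b y).symm

theorem exists_staircase {x y z : ℝ} (h : |z| ≤ |x * y| / 2) :
    ∃ a b : ℝ, a + b = x ∧ y * (a - b) / 2 = z ∧ |a| + |b| = |x| := by
  rcases eq_or_ne y 0 with rfl | hy
  · have hz : z = 0 := by simpa using h
    exact ⟨x, 0, add_zero x, by simp [hz], by simp⟩
  have he : |z / y| ≤ |x| / 2 := by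
    rwa [abs_div, div_le_iff₀ (abs_pos.2 hy), div_mul_eq_mul_div, ← abs_mul]
  refine ⟨x / 2 + z / y, x / 2 - z / y, by ring, by field_simp; ring, ?_⟩
  rw [← (abs_add_eq_add_abs_iff _ _).2, add_add_sub_cancel, add_halves]
  rcases abs_le.1 he with ⟨he₁, he₂⟩
  rcases le_total 0 x with hx | hx
  · rw [abs_of_nonneg hx] at he₁ he₂
    exact .inl ⟨by linarith, by linarith⟩
  · rw [abs_of_nonpos hx] at he₁ he₂
    exact .inr ⟨by linarith, by linarith⟩

/-- In the region `|z| ≤ |xy|/2`, the subFinsler distance from the identity in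
the Heisenberg group for the ℓ¹ horizontal norm is `|x| + |y|`. -/
theorem d3_eq_of_staircase (x y z : ℝ) (h : |z| ≤ |x * y| / 2) :
    d3 (x, y, z) = |x| + |y| := by
  obtain ⟨a, b, rfl, rfl, hab⟩ := exists_staircase h
  rw [d3_eq_sInf_horizontalLengths]
  have hmem := staircase_mem_horizontalLengths a b y
  rw [hab] at hmem
  have hlower : ∀ L ∈ horizontalLengths (a + b, y, y * (a - b) / 2), |a + b| + |y| ≤ L :=
    fun _ => abs_add_abs_le_of_mem_horizontalLengths
  exact le_antisymm (csInf_le ⟨_, hlower⟩ hmem) (le_csInf ⟨_, hmem⟩ hlower)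
end

section
/- Let Γ = H_3(ℤ) × ℤ with word metric ρ₂ given by the generating set S₂ = {(1;0,0,0)^{±1}, (0;1,0,0)^{±1}, (0;0,1,0)^{±1}}. Then for γ_n = (n;0,0,n) there is a constant c > 0 such that ρ₂(id, γ_n) − n ≥ c√n for all sufficiently large n. -/
/-- The group `Γ = ℤ × H₃(ℤ)`, with elements written `(v; x, y, z)` in Malcev
coordinates for the integral Heisenberg group: the group law is
`(v;x,y,z)·(v';x',y',z') = (v+v'; x+x', y+y', z+z'+xy')`. -/
abbrev Γ4 : Type := ℤ × ℤ × ℤ × ℤ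

/-- Multiplication in `ℤ × H₃(ℤ)`. -/
def gmul (a b : Γ4) : Γ4 :=
  (a.1 + b.1, a.2.1 + b.2.1, a.2.2.1 + b.2.2.1,
    a.2.2.2 + b.2.2.2 + a.2.1 * b.2.2.1)

/-- Inversion in `ℤ × H₃(ℤ)`. -/
def ginv (a : Γ4) : Γ4 :=
  (-a.1, -a.2.1, -a.2.2.1, -a.2.2.2 + a.2.1 * a.2.2.1)

/-- The identity of `ℤ × H₃(ℤ)`. -/
def gone : Γ4 := (0, 0, 0, 0)

/-- The word length `ρ_S(id, γ)` of `γ` with respect to a generating set `S`: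
the least `n` such that `γ` is a product of `n` elements of `S`. -/
noncomputable def wordLen (S : Set Γ4) (γ : Γ4) : ℕ :=
  sInf {n : ℕ | ∃ l : List Γ4, l.length = n ∧ (∀ a ∈ l, a ∈ S) ∧
    l.foldl gmul gone = γ}

/-- The generating set `S₁ = {(1;0,0,1)^{±1}, (1;0,0,-1)^{±1}, (0;1,0,0)^{±1}, (0;0,1,0)^{±1}}`. -/
def S1 : Set Γ4 :=
  {(1,0,0,1), (-1,0,0,-1), (1,0,0,-1), (-1,0,0,1),
   (0,1,0,0), (0,-1,0,0), (0,0,1,0), (0,0,-1,0)}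

/-- The generating set `S₂ = {(1;0,0,0)^{±1}, (0;1,0,0)^{±1}, (0;0,1,0)^{±1}}`. -/
def S2 : Set Γ4 :=
  {(1,0,0,0), (-1,0,0,0), (0,1,0,0), (0,-1,0,0), (0,0,1,0), (0,0,-1,0)}

lemma foldl_rep_v (g : Γ4) (n : ℕ) :
    (List.replicate n ((1:ℤ),(0:ℤ),(0:ℤ),(0:ℤ))).foldl gmul g
      = (g.1 + n, g.2.1, g.2.2.1, g.2.2.2) := by
  induction n generalizing g with
  | zero => simp
  | succ k ih =>
      rw [List.replicate_succ, List.foldl_cons, ih]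
      simp [gmul]; ring

lemma foldl_rep_y (c : ℤ) (g : Γ4) (n : ℕ) :
    (List.replicate n ((0:ℤ),(0:ℤ),c,(0:ℤ))).foldl gmul g
      = (g.1, g.2.1, g.2.2.1 + n * c, g.2.2.2 + g.2.1 * (n * c)) := by
  induction n generalizing g with
  | zero => simp
  | succ k ih =>
      rw [List.replicate_succ, List.foldl_cons, ih]
      simp [gmul]
      constructor <;> push_cast <;> ring

/-- Key invariant: any word in `S2` of value `g` splits its length into
`V + X + Y` with `|v| ≤ V`, `|x| ≤ X`, `|z| ≤ X * Y`. -/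
lemma key_bound : ∀ l : List Γ4, (∀ a ∈ l, a ∈ S2) →
    ∃ V X Y : ℕ, V + X + Y = l.length ∧
      |(l.foldl gmul gone).1| ≤ (V : ℤ) ∧
      |(l.foldl gmul gone).2.1| ≤ (X : ℤ) ∧
      |(l.foldl gmul gone).2.2.2| ≤ (X : ℤ) * (Y : ℤ) := by
  intro l
  induction l using List.reverseRecOn with
  | nil => intro _; exact ⟨0, 0, 0, by simp, by simp [gone], by simp [gone], by simp [gone]⟩
  | append_singleton l a ih =>
      intro hS
      obtain ⟨V, X, Y, hlen, hv, hx, hz⟩ := ih (fun b hb => hS b (by simp [hb]))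
      have ha : a ∈ S2 := hS a (by simp)
      rw [List.foldl_append, List.foldl_cons, List.foldl_nil] at *
      set g := l.foldl gmul gone with hg
      simp only [S2, Set.mem_insert_iff, Set.mem_singleton_iff] at ha
      rw [abs_le] at hv hx hz
      have hXY : (X:ℤ) ≥ 0 ∧ (Y:ℤ) ≥ 0 := ⟨Int.ofNat_nonneg X, Int.ofNat_nonneg Y⟩
      rcases ha with h|h|h|h|h|h <;> subst h <;> simp only [gmul] <;>
      [ exact ⟨V+1, X, Y, by simp [← hlen]; ring, by rw [abs_le]; push_cast; omega,
          by rw [abs_le]; push_cast; simpa using hx,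
          by rw [abs_le]; push_cast; simpa using hz⟩;
        exact ⟨V+1, X, Y, by simp [← hlen]; ring, by rw [abs_le]; push_cast; omega,
          by rw [abs_le]; push_cast; simpa using hx,
          by rw [abs_le]; push_cast; simpa using hz⟩;
        exact ⟨V, X+1, Y, by simp [← hlen]; ring, by rw [abs_le]; push_cast; simpa using hv,
          by rw [abs_le]; push_cast; omega,
          by rw [abs_le]; push_cast; constructor <;> nlinarith [hz.1, hz.2, hXY.2]⟩;
        exact ⟨V, X+1, Y, by simp [← hlen]; ring, by rw [abs_le]; push_cast; simpa using hv,
          by rw [abs_le]; push_cast; omega,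
          by rw [abs_le]; push_cast; constructor <;> nlinarith [hz.1, hz.2, hXY.2]⟩;
        exact ⟨V, X, Y+1, by simp [← hlen]; ring, by rw [abs_le]; push_cast; simpa using hv,
          by rw [abs_le]; push_cast; simpa using hx,
          by rw [abs_le]; push_cast; constructor <;> nlinarith [hz.1, hz.2, hx.1, hx.2]⟩;
        exact ⟨V, X, Y+1, by simp [← hlen]; ring, by rw [abs_le]; push_cast; simpa using hv,
          by rw [abs_le]; push_cast; simpa using hx,
          by rw [abs_le]; push_cast; constructor <;> nlinarith [hz.1, hz.2, hx.1, hx.2]⟩ ]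

/-- For the word metric `ρ₂` on `Γ = H₃(ℤ) × ℤ` given by the generating set
`S₂`, and `γ_n = (n;0,0,n)`, there is `c > 0` with `ρ₂(id,γ_n) − n ≥ c√n` for
all sufficiently large `n`. -/
theorem wordLen_S2_sub_n_ge_sqrt :
    ∃ c : ℝ, 0 < c ∧ ∃ N : ℕ, ∀ n : ℕ, N ≤ n →
      c * Real.sqrt n ≤ (wordLen S2 ((n : ℤ), 0, 0, (n : ℤ)) : ℝ) - n := by
  refine ⟨1, one_pos, 0, fun n _ => ?_⟩
  set T : Set ℕ := {m : ℕ | ∃ l : List Γ4, l.length = m ∧ (∀ a ∈ l, a ∈ S2) ∧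
      l.foldl gmul gone = ((n : ℤ), 0, 0, (n : ℤ))} with hT
  -- the set is nonempty: explicit word
  have hne : T.Nonempty := by
    refine ⟨3 * n + 2, List.replicate n ((1:ℤ),(0:ℤ),(0:ℤ),(0:ℤ)) ++
      ([((0:ℤ),(1:ℤ),(0:ℤ),(0:ℤ))] ++ (List.replicate n ((0:ℤ),(0:ℤ),(1:ℤ),(0:ℤ)) ++
      ([((0:ℤ),(-1:ℤ),(0:ℤ),(0:ℤ))] ++ List.replicate n ((0:ℤ),(0:ℤ),(-1:ℤ),(0:ℤ))))), ?_, ?_, ?_⟩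
    · simp; ring
    · intro a ha
      simp only [List.mem_append, List.mem_replicate, List.mem_singleton] at ha
      rcases ha with ⟨_, h⟩|h|⟨_, h⟩|h|⟨_, h⟩ <;> subst h <;> simp [S2]
    · rw [List.foldl_append, List.foldl_append, List.foldl_append, List.foldl_append,
        foldl_rep_v]
      simp only [List.foldl_cons, List.foldl_nil]
      rw [foldl_rep_y, foldl_rep_y]
      simp [gmul, gone]
  have hmem : wordLen S2 ((n : ℤ), 0, 0, (n : ℤ)) ∈ T := Nat.sInf_mem hne
  obtain ⟨l, hlen, hS, hval⟩ := hmem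
  obtain ⟨V, X, Y, hsum, hv, hx, hz⟩ := key_bound l hS
  rw [hval] at hv hx hz
  simp only at hv hx hz
  have hVn : (n : ℤ) ≤ V := le_trans (le_abs_self _) hv
  have hXY : (n : ℤ) ≤ (X : ℤ) * Y := le_trans (le_abs_self _) hz
  -- so n ≤ X*Y ≤ (X+Y)^2 and length = V+X+Y ≥ n + X + Y
  have h1 : (n : ℝ) ≤ ((X + Y : ℕ) : ℝ) ^ 2 := by
    have : (n : ℤ) ≤ ((X : ℤ) + Y) ^ 2 := by nlinarith [Int.ofNat_nonneg X, Int.ofNat_nonneg Y]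
    exact_mod_cast this
  have h2 : Real.sqrt n ≤ ((X + Y : ℕ) : ℝ) := by
    calc Real.sqrt n ≤ Real.sqrt (((X + Y : ℕ) : ℝ) ^ 2) := Real.sqrt_le_sqrt h1
    _ = ((X + Y : ℕ) : ℝ) := by rw [Real.sqrt_sq (by positivity)]
  have hL : (n : ℝ) + ((X + Y : ℕ) : ℝ) ≤ (wordLen S2 ((n : ℤ), 0, 0, (n : ℤ)) : ℝ) := by
    rw [← hlen, ← hsum]
    have : (n : ℤ) + ((X : ℤ) + Y) ≤ (V : ℤ) + X + Y := by omega
    have := this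
    push_cast
    push_cast at this
    exact_mod_cast by
      have hVn' : (n : ℝ) ≤ (V : ℝ) := by exact_mod_cast hVn
      linarith
  rw [one_mul]
  linarith
end

section
/- There exist two finite symmetric generating sets S₁, S₂ of Γ = H_3(ℤ) × ℤ such that the corresponding word metrics ρ₁, ρ₂ satisfy ρ₁(id,γ)/ρ₂(id,γ) → 1 as γ → ∞, but sup_γ |ρ₁(id,γ) − ρ₂(id,γ)| = ∞; in fact |ρ₁(id,γ_n) − ρ₂(id,γ_n)| ≥ c√n along γ_n = (n;0,0,n). -/
open Filter

/-!
Over `S₂`, a word for `(v;x,y,z)` needs `|v|` letters `(±1;0,0,0)`, and since the central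
coordinate of a product of `x`- and `y`-letters is at most the product of their numbers, at least
`√|z|` further letters; so `ρ₂(n;0,0,n) ≥ n + √n`, whereas `ρ₁(n;0,0,n) ≤ n` via `(1;0,0,1)ⁿ`.

Conversely, a word over either set becomes a word over the other once each letter is multiplied
by a central element `(0;0,0,e)` with `|e| ≤ 1`. The accumulated central error `Z^m`, `|m| ≤ ρ`,
is a product of two commutators `[X^a, Y^b] = Z^{ab}` of total length `O(√ρ)`, where `X`, `Y`, `Z`
are `(0;1,0,0)`, `(0;0,1,0)`, `(0;0,0,1)`. Hence `|ρ₁ − ρ₂| = O(√ρ₂)`, and `ρ₁/ρ₂ → 1` because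
balls of a word metric are finite.
-/

lemma gmul_assoc (a b c : Γ4) : gmul (gmul a b) c = gmul a (gmul b c) := by
  simp only [gmul, Prod.mk.injEq]
  refine ⟨by ring, by ring, by ring, by ring⟩

lemma gmul_gone (a : Γ4) : gmul a gone = a := by simp [gmul, gone]

def evalWord (l : List Γ4) : Γ4 := l.foldl gmul gone

lemma evalWord_concat (l : List Γ4) (a : Γ4) : evalWord (l ++ [a]) = gmul (evalWord l) a := by
  simp [evalWord]

lemma foldl_gmul_eq_gmul_evalWord (l : List Γ4) (s : Γ4) :
    l.foldl gmul s = gmul s (evalWord l) := by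
  induction l using List.reverseRecOn with
  | nil => simp [evalWord, gmul_gone]
  | append_singleton l a ih => rw [List.foldl_concat, ih, evalWord_concat, gmul_assoc]

lemma evalWord_append (l₁ l₂ : List Γ4) :
    evalWord (l₁ ++ l₂) = gmul (evalWord l₁) (evalWord l₂) := by
  rw [evalWord, List.foldl_append, foldl_gmul_eq_gmul_evalWord]; rfl

lemma evalWord_replicate {g : Γ4} (hg : g.2.1 * g.2.2.1 = 0) (n : ℕ) :
    evalWord (List.replicate n g) = (n : ℤ) • g := by
  induction n with
  | zero => simp [evalWord, gone]
  | succ n ih =>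
    rw [List.replicate_succ', evalWord_concat, ih]
    obtain ⟨v, x, y, z⟩ := g
    simp only [gmul, Prod.smul_mk, smul_eq_mul, Prod.mk.injEq] at hg ⊢
    push_cast
    refine ⟨by ring, by ring, by ring, by linear_combination (n : ℤ) * hg⟩

def powWord (g : Γ4) (m : ℤ) : List Γ4 :=
  List.replicate m.natAbs (if 0 ≤ m then g else ginv g)

lemma length_powWord (g : Γ4) (m : ℤ) : (powWord g m).length = m.natAbs := by
  simp [powWord]

lemma mem_powWord {g a : Γ4} {m : ℤ} (h : a ∈ powWord g m) : a = g ∨ a = ginv g := by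
  rw [powWord, List.mem_replicate] at h
  split_ifs at h <;> simp [h.2]

lemma evalWord_powWord {g : Γ4} (hg : g.2.1 * g.2.2.1 = 0) (m : ℤ) :
    evalWord (powWord g m) = m • g := by
  rcases le_or_gt 0 m with hm | hm
  · rw [powWord, if_pos hm, evalWord_replicate hg, Int.natAbs_of_nonneg hm]
  · have hinv : ginv g = -g := by
      obtain ⟨v, x, y, z⟩ := g
      simp only [ginv, Prod.neg_mk] at hg ⊢
      rw [hg, add_zero]
    have hg' : (ginv g).2.1 * (ginv g).2.2.1 = 0 := by simp [ginv, hg]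
    rw [powWord, if_neg hm.not_ge, evalWord_replicate hg', hinv, Int.ofNat_natAbs_of_nonpos hm.le,
      smul_neg, neg_smul, neg_neg]

def commutatorWord (a b : ℤ) : List Γ4 :=
  powWord (0, 1, 0, 0) a ++ powWord (0, 0, 1, 0) b ++ powWord (0, 1, 0, 0) (-a) ++
    powWord (0, 0, 1, 0) (-b)

lemma evalWord_commutatorWord (a b : ℤ) : evalWord (commutatorWord a b) = (0, 0, 0, a * b) := by
  simp only [commutatorWord, evalWord_append, evalWord_powWord (g := (0, 1, 0, 0)) (by simp),
    evalWord_powWord (g := (0, 0, 1, 0)) (by simp), Prod.smul_mk, smul_eq_mul, gmul, Prod.mk.injEq]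
  refine ⟨by ring, by ring, by ring, by ring⟩

lemma length_commutatorWord (a b : ℤ) :
    (commutatorWord a b).length = 2 * (a.natAbs + b.natAbs) := by
  simp only [commutatorWord, List.length_append, length_powWord, Int.natAbs_neg]
  ring

lemma forall_mem_powWord {T : Set Γ4} (hT : ∀ a ∈ T, ginv a ∈ T) {g : Γ4} (hg : g ∈ T)
    (m : ℤ) : ∀ a ∈ powWord g m, a ∈ T := by
  intro a ha
  rcases mem_powWord ha with rfl | rfl
  exacts [hg, hT g hg]

lemma forall_mem_commutatorWord {T : Set Γ4} (hT : ∀ a ∈ T, ginv a ∈ T)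
    (hX : (0, 1, 0, 0) ∈ T) (hY : (0, 0, 1, 0) ∈ T) (a b : ℤ) :
    ∀ g ∈ commutatorWord a b, g ∈ T := by
  simp only [commutatorWord, List.mem_append]
  rintro g (((hg | hg) | hg) | hg)
  exacts [forall_mem_powWord hT hX _ g hg, forall_mem_powWord hT hY _ g hg,
    forall_mem_powWord hT hX _ g hg, forall_mem_powWord hT hY _ g hg]

/-- Writing `|c| = s q + r` with `s = ⌊√|c|⌋` gives `Z^c = [X^{±s}, Y^q] [X^{±1}, Y^r]`. -/
def centralWord (c : ℤ) : List Γ4 :=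
  commutatorWord (c.sign * c.natAbs.sqrt) (c.natAbs / c.natAbs.sqrt : ℕ) ++
    commutatorWord c.sign (c.natAbs % c.natAbs.sqrt : ℕ)

lemma evalWord_centralWord (c : ℤ) : evalWord (centralWord c) = (0, 0, 0, c) := by
  simp only [centralWord, evalWord_append, evalWord_commutatorWord, gmul, Prod.mk.injEq]
  refine ⟨by ring, by ring, by ring, ?_⟩
  have hdiv : ((c.natAbs.sqrt * (c.natAbs / c.natAbs.sqrt) + c.natAbs % c.natAbs.sqrt : ℕ) : ℤ)
      = c.natAbs := congrArg _ (Nat.div_add_mod _ _)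
  simp only [Nat.cast_add, Nat.cast_mul] at hdiv
  linear_combination c.sign * hdiv + Int.sign_mul_natAbs c

lemma length_centralWord_le (c : ℤ) :
    (centralWord c).length ≤ 6 * c.natAbs.sqrt + 4 := by
  simp only [centralWord, List.length_append, length_commutatorWord, Int.natAbs_mul,
    Int.natAbs_natCast]
  have hsign : c.sign.natAbs ≤ 1 := by rcases Int.sign_trichotomy c with h | h | h <;> simp [h]
  set s := c.natAbs.sqrt
  rcases Nat.eq_zero_or_pos s with hs | hs
  · have hc : c = 0 := Int.natAbs_eq_zero.mp (Nat.sqrt_eq_zero.mp hs)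
    simp [hc]
  · have hq : c.natAbs / s ≤ s + 2 := by
      rw [Nat.div_le_iff_le_mul_add_pred hs]
      nlinarith [Nat.lt_succ_sqrt c.natAbs]
    have hr : c.natAbs % s < s := Nat.mod_lt _ hs
    nlinarith

lemma forall_mem_centralWord {T : Set Γ4} (hT : ∀ a ∈ T, ginv a ∈ T)
    (hX : (0, 1, 0, 0) ∈ T) (hY : (0, 0, 1, 0) ∈ T) (c : ℤ) : ∀ g ∈ centralWord c, g ∈ T := by
  simp only [centralWord, List.mem_append]
  rintro g (hg | hg) <;> exact forall_mem_commutatorWord hT hX hY _ _ g hg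

lemma evalWord_map_gmul_central (l : List Γ4) (δ : Γ4 → ℤ) :
    evalWord (l.map fun a => gmul a (0, 0, 0, δ a)) =
      gmul (evalWord l) (0, 0, 0, (l.map δ).sum) := by
  induction l using List.reverseRecOn with
  | nil => simp [evalWord, gmul, gone]
  | append_singleton l a ih =>
    rw [List.map_append, List.map_singleton, evalWord_concat, evalWord_concat, ih]
    simp only [List.map_append, List.map_singleton, List.sum_append, List.sum_singleton, gmul,
      Prod.mk.injEq]
    refine ⟨by ring, by ring, by ring, by ring⟩

lemma natAbs_sum_map_le_length {α : Type*} (l : List α) (δ : α → ℤ)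
    (hδ : ∀ a ∈ l, |δ a| ≤ 1) : (l.map δ).sum.natAbs ≤ l.length := by
  induction l with
  | nil => simp
  | cons a l ih =>
    have ha : (δ a).natAbs ≤ 1 := by
      have := hδ a List.mem_cons_self
      rw [Int.abs_eq_natAbs] at this
      omega
    have hl := ih fun b hb => hδ b (List.mem_cons_of_mem a hb)
    simp only [List.map_cons, List.sum_cons, List.length_cons]
    have := Int.natAbs_add_le (δ a) (l.map δ).sum
    omega

lemma exists_word_of_central_perturbation {S T : Set Γ4} (hT : ∀ a ∈ T, ginv a ∈ T)
    (hX : (0, 1, 0, 0) ∈ T) (hY : (0, 0, 1, 0) ∈ T)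
    (hST : ∀ a ∈ S, ∃ e : ℤ, |e| ≤ 1 ∧ gmul a (0, 0, 0, e) ∈ T)
    {l : List Γ4} (hl : ∀ a ∈ l, a ∈ S) :
    ∃ l' : List Γ4, (∀ a ∈ l', a ∈ T) ∧ evalWord l' = evalWord l ∧
      l'.length ≤ l.length + 6 * l.length.sqrt + 4 := by
  choose! δ hδ hδT using hST
  set m := (l.map δ).sum
  refine ⟨(l.map fun a => gmul a (0, 0, 0, δ a)) ++ centralWord (-m), ?_, ?_, ?_⟩
  · simp only [List.mem_append, List.mem_map]
    rintro g (⟨a, ha, rfl⟩ | hg)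
    · exact hδT a (hl a ha)
    · exact forall_mem_centralWord hT hX hY _ g hg
  · rw [evalWord_append, evalWord_map_gmul_central, evalWord_centralWord, gmul_assoc]
    convert gmul_gone (evalWord l) using 2
    simp [gmul, gone, m]
  · have hm : (-m).natAbs ≤ l.length := by
      rw [Int.natAbs_neg]
      exact natAbs_sum_map_le_length l δ fun a ha => hδ a (hl a ha)
    have := length_centralWord_le (-m)
    have := Nat.sqrt_le_sqrt hm
    simp only [List.length_append, List.length_map]
    omega

lemma wordLen_le_length {S : Set Γ4} {l : List Γ4} (hl : ∀ a ∈ l, a ∈ S) :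
    wordLen S (evalWord l) ≤ l.length :=
  Nat.sInf_le ⟨l, rfl, hl, rfl⟩

lemma exists_word_length_eq_wordLen {S : Set Γ4} {γ : Γ4}
    (h : ∃ l : List Γ4, (∀ a ∈ l, a ∈ S) ∧ evalWord l = γ) :
    ∃ l : List Γ4, (∀ a ∈ l, a ∈ S) ∧ evalWord l = γ ∧ l.length = wordLen S γ := by
  obtain ⟨l₀, hl₀, rfl⟩ := h
  obtain ⟨l, hlen, hl, hγ⟩ := Nat.sInf_mem (⟨l₀.length, l₀, rfl, hl₀, rfl⟩ :
    {n : ℕ | ∃ l : List Γ4, l.length = n ∧ (∀ a ∈ l, a ∈ S) ∧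
      l.foldl gmul gone = evalWord l₀}.Nonempty)
  exact ⟨l, hl, hγ, hlen⟩

lemma wordLen_le_wordLen_add_sqrt {S T : Set Γ4} (hT : ∀ a ∈ T, ginv a ∈ T)
    (hX : (0, 1, 0, 0) ∈ T) (hY : (0, 0, 1, 0) ∈ T)
    (hST : ∀ a ∈ S, ∃ e : ℤ, |e| ≤ 1 ∧ gmul a (0, 0, 0, e) ∈ T) {γ : Γ4}
    (hγ : ∃ l : List Γ4, (∀ a ∈ l, a ∈ S) ∧ evalWord l = γ) :
    (wordLen T γ : ℝ) ≤ wordLen S γ + 6 * √(wordLen S γ) + 4 := by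
  obtain ⟨l, hl, rfl, hlen⟩ := exists_word_length_eq_wordLen hγ
  obtain ⟨l', hl', hev, hlen'⟩ := exists_word_of_central_perturbation hT hX hY hST hl
  rw [← hlen, ← hev]
  calc (wordLen T (evalWord l') : ℝ) ≤ l.length + 6 * l.length.sqrt + 4 := by
        exact_mod_cast (wordLen_le_length hl').trans hlen'
    _ ≤ l.length + 6 * √l.length + 4 := by gcongr; exact Real.nat_sqrt_le_real_sqrt

lemma exists_word_eq {T : Set Γ4} (hT : ∀ a ∈ T, ginv a ∈ T)
    (hX : (0, 1, 0, 0) ∈ T) (hY : (0, 0, 1, 0) ∈ T) {e : ℤ} (hW : (1, 0, 0, e) ∈ T) (γ : Γ4) :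
    ∃ l : List Γ4, (∀ a ∈ l, a ∈ T) ∧ evalWord l = γ := by
  obtain ⟨v, x, y, z⟩ := γ
  refine ⟨powWord (1, 0, 0, e) v ++ powWord (0, 1, 0, 0) x ++ powWord (0, 0, 1, 0) y ++
    centralWord (z - x * y - v * e), ?_, ?_⟩
  · simp only [List.mem_append]
    rintro a (((ha | ha) | ha) | ha)
    exacts [forall_mem_powWord hT hW _ a ha, forall_mem_powWord hT hX _ a ha,
      forall_mem_powWord hT hY _ a ha, forall_mem_centralWord hT hX hY _ a ha]
  · simp only [evalWord_append, evalWord_powWord (g := (1, 0, 0, e)) (by simp),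
      evalWord_powWord (g := (0, 1, 0, 0)) (by simp),
      evalWord_powWord (g := (0, 0, 1, 0)) (by simp),
      evalWord_centralWord, Prod.smul_mk, smul_eq_mul, gmul, Prod.mk.injEq]
    refine ⟨by ring, by ring, by ring, by ring⟩

lemma finite_setOf_wordLen_le {S : Set Γ4} (hS : S.Finite)
    (hgen : ∀ γ : Γ4, ∃ l : List Γ4, (∀ a ∈ l, a ∈ S) ∧ evalWord l = γ) (R : ℕ) :
    {γ | wordLen S γ ≤ R}.Finite := by
  have : Finite S := hS.to_subtype
  refine ((List.finite_length_le S R).image fun l => evalWord (l.map Subtype.val)).subset ?_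
  intro γ hγ
  obtain ⟨l, hl, rfl, hlen⟩ := exists_word_length_eq_wordLen (hgen γ)
  lift l to List S using hl
  exact ⟨l, by simpa [← hlen] using hγ, rfl⟩

lemma tendsto_wordLen_cofinite_atTop {S : Set Γ4} (hS : S.Finite)
    (hgen : ∀ γ : Γ4, ∃ l : List Γ4, (∀ a ∈ l, a ∈ S) ∧ evalWord l = γ) :
    Tendsto (fun γ => (wordLen S γ : ℝ)) cofinite atTop := by
  refine tendsto_natCast_atTop_atTop.comp (tendsto_atTop.2 fun R => ?_)
  exact eventually_cofinite.2 ((finite_setOf_wordLen_le hS hgen R).subset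
    fun γ (hγ : ¬R ≤ wordLen S γ) => (not_le.1 hγ).le)

lemma tendsto_div_nhds_one_of_abs_sub_le {α : Type*} {l : Filter α} {f g : α → ℝ} {C : ℝ}
    (hg : Tendsto g l atTop) (hfg : ∀ᶠ x in l, |f x - g x| ≤ C * √(g x)) :
    Tendsto (fun x => f x / g x) l (nhds 1) := by
  have hlim : Tendsto (fun x => C / √(g x)) l (nhds 0) :=
    tendsto_const_nhds.div_atTop (Real.tendsto_sqrt_atTop.comp hg)
  rw [tendsto_iff_norm_sub_tendsto_zero]
  refine squeeze_zero' (Eventually.of_forall fun _ => norm_nonneg _) ?_ hlim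
  filter_upwards [hfg, hg.eventually_gt_atTop 0] with x hx hpos
  have hsqpos : 0 < √(g x) := Real.sqrt_pos.2 hpos
  rw [Real.norm_eq_abs, div_sub_one hpos.ne', abs_div, abs_of_pos hpos, div_le_div_iff₀ hpos hsqpos]
  calc |f x - g x| * √(g x) ≤ C * √(g x) * √(g x) := mul_le_mul_of_nonneg_right hx hsqpos.le
    _ = C * g x := by rw [mul_assoc, Real.mul_self_sqrt hpos.le]

lemma abs_sub_le_of_le_add_sqrt {a b : ℝ} (ha : 0 ≤ a) (hb : 1 ≤ b)
    (hab : a ≤ b + 6 * √b + 4) (hba : b ≤ a + 6 * √a + 4) : |a - b| ≤ 28 * √b := by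
  have hsa := Real.sq_sqrt ha
  have hsb := Real.sq_sqrt (zero_le_one.trans hb)
  have hs1 : 1 ≤ √b := Real.one_le_sqrt.2 hb
  have hsab : √a ≤ √b + 3 := by nlinarith [Real.sqrt_nonneg a]
  rw [abs_le]
  constructor <;> nlinarith

/-- The central coordinate of a product of letters `(vᵢ;xᵢ,yᵢ,0)` is `∑_{i<j} xᵢ yⱼ`. -/
lemma abs_evalWord_le {l : List Γ4} (hl : ∀ a ∈ l, a.2.2.2 = 0) :
    |(evalWord l).1| ≤ (l.map fun a => |a.1|).sum ∧
      |(evalWord l).2.1| ≤ (l.map fun a => |a.2.1|).sum ∧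
      |(evalWord l).2.2.2| ≤ (l.map fun a => |a.2.1|).sum * (l.map fun a => |a.2.2.1|).sum := by
  induction l using List.reverseRecOn with
  | nil => simp [evalWord, gone]
  | append_singleton l a ih =>
    obtain ⟨hv, hx, hz⟩ := ih fun b hb => hl b (List.mem_append_left _ hb)
    have ha : a.2.2.2 = 0 := hl a (by simp)
    simp only [evalWord_concat, gmul, List.map_append, List.map_singleton, List.sum_append,
      List.sum_singleton, ha, add_zero]
    have hY : 0 ≤ (l.map fun a => |a.2.2.1|).sum :=
      List.sum_nonneg (List.forall_mem_map.2 fun _ _ => abs_nonneg _)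
    refine ⟨(abs_add_le _ _).trans (by gcongr), (abs_add_le _ _).trans (by gcongr), ?_⟩
    calc |(evalWord l).2.2.2 + (evalWord l).2.1 * a.2.2.1|
        ≤ |(evalWord l).2.2.2| + |(evalWord l).2.1| * |a.2.2.1| := by
          rw [← abs_mul]; exact abs_add_le _ _
      _ ≤ _ := by nlinarith [abs_nonneg a.2.1, abs_nonneg a.2.2.1, abs_nonneg (evalWord l).2.1]

lemma central_eq_zero_of_mem_S2 {a : Γ4} (ha : a ∈ S2) : a.2.2.2 = 0 := by
  simp only [S2, Set.mem_insert_iff, Set.mem_singleton_iff] at ha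
  rcases ha with rfl | rfl | rfl | rfl | rfl | rfl <;> rfl

lemma abs_add_abs_add_abs_eq_one_of_mem_S2 {a : Γ4} (ha : a ∈ S2) :
    |a.1| + |a.2.1| + |a.2.2.1| = 1 := by
  simp only [S2, Set.mem_insert_iff, Set.mem_singleton_iff] at ha
  rcases ha with rfl | rfl | rfl | rfl | rfl | rfl <;> simp

lemma length_eq_of_forall_mem_S2 {l : List Γ4} (hl : ∀ a ∈ l, a ∈ S2) :
    (l.length : ℤ) = (l.map fun a => |a.1|).sum + (l.map fun a => |a.2.1|).sum +
      (l.map fun a => |a.2.2.1|).sum := by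
  induction l with
  | nil => simp
  | cons a l ih =>
    have ha := abs_add_abs_add_abs_eq_one_of_mem_S2 (hl a List.mem_cons_self)
    have := ih fun b hb => hl b (List.mem_cons_of_mem a hb)
    simp only [List.length_cons, List.map_cons, List.sum_cons]
    push_cast
    linarith

lemma abs_fst_add_sqrt_le_length_of_forall_mem_S2 {l : List Γ4} (hl : ∀ a ∈ l, a ∈ S2) :
    |((evalWord l).1 : ℝ)| + √|((evalWord l).2.2.2 : ℝ)| ≤ l.length := by
  obtain ⟨hv, hx, hz⟩ := abs_evalWord_le fun a ha => central_eq_zero_of_mem_S2 (hl a ha)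
  have hlen := length_eq_of_forall_mem_S2 hl
  set V := (l.map fun a => |a.1|).sum
  set X := (l.map fun a => |a.2.1|).sum
  set Y := (l.map fun a => |a.2.2.1|).sum
  have hX : 0 ≤ X := List.sum_nonneg (List.forall_mem_map.2 fun _ _ => abs_nonneg _)
  have hY : 0 ≤ Y := List.sum_nonneg (List.forall_mem_map.2 fun _ _ => abs_nonneg _)
  have hz' : |(evalWord l).2.2.2| ≤ (X + Y) ^ 2 := by nlinarith
  have hsqrt : √|((evalWord l).2.2.2 : ℝ)| ≤ X + Y := by
    rw [Real.sqrt_le_left (by exact_mod_cast add_nonneg hX hY)]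
    exact_mod_cast hz'
  have hv' : |((evalWord l).1 : ℝ)| ≤ V := by exact_mod_cast hv
  have hlen' : (l.length : ℝ) = V + X + Y := by exact_mod_cast hlen
  linarith

lemma ginv_mem_S1 : ∀ a ∈ S1, ginv a ∈ S1 := by
  intro a ha
  simp only [S1, Set.mem_insert_iff, Set.mem_singleton_iff] at ha ⊢
  rcases ha with rfl | rfl | rfl | rfl | rfl | rfl | rfl | rfl <;> norm_num [ginv]

lemma ginv_mem_S2 : ∀ a ∈ S2, ginv a ∈ S2 := by
  intro a ha
  simp only [S2, Set.mem_insert_iff, Set.mem_singleton_iff] at ha ⊢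
  rcases ha with rfl | rfl | rfl | rfl | rfl | rfl <;> norm_num [ginv]

lemma exists_word_S1 (γ : Γ4) : ∃ l : List Γ4, (∀ a ∈ l, a ∈ S1) ∧ evalWord l = γ :=
  exists_word_eq ginv_mem_S1 (by simp [S1]) (by simp [S1]) (e := 1) (by simp [S1]) γ

lemma exists_word_S2 (γ : Γ4) : ∃ l : List Γ4, (∀ a ∈ l, a ∈ S2) ∧ evalWord l = γ :=
  exists_word_eq ginv_mem_S2 (by simp [S2]) (by simp [S2]) (e := 0) (by simp [S2]) γ

lemma exists_gmul_central_mem_S1 : ∀ a ∈ S2, ∃ e : ℤ, |e| ≤ 1 ∧ gmul a (0, 0, 0, e) ∈ S1 := by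
  intro a ha
  refine ⟨|a.1|, ?_, ?_⟩ <;>
    simp only [S2, Set.mem_insert_iff, Set.mem_singleton_iff] at ha <;>
    rcases ha with rfl | rfl | rfl | rfl | rfl | rfl <;> norm_num [gmul, S1]

lemma exists_gmul_central_mem_S2 : ∀ a ∈ S1, ∃ e : ℤ, |e| ≤ 1 ∧ gmul a (0, 0, 0, e) ∈ S2 := by
  intro a ha
  refine ⟨-a.2.2.2, ?_, ?_⟩ <;>
    simp only [S1, Set.mem_insert_iff, Set.mem_singleton_iff] at ha <;>
    rcases ha with rfl | rfl | rfl | rfl | rfl | rfl | rfl | rfl <;> norm_num [gmul, S2]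

lemma abs_wordLen_S1_sub_wordLen_S2_le {γ : Γ4} (hγ : 1 ≤ wordLen S2 γ) :
    |(wordLen S1 γ : ℝ) - wordLen S2 γ| ≤ 28 * √(wordLen S2 γ) :=
  abs_sub_le_of_le_add_sqrt (Nat.cast_nonneg _) (by exact_mod_cast hγ)
    (wordLen_le_wordLen_add_sqrt ginv_mem_S1 (by simp [S1]) (by simp [S1])
      exists_gmul_central_mem_S1 (exists_word_S2 γ))
    (wordLen_le_wordLen_add_sqrt ginv_mem_S2 (by simp [S2]) (by simp [S2])
      exists_gmul_central_mem_S2 (exists_word_S1 γ))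

lemma wordLen_S1_le (n : ℕ) : wordLen S1 ((n : ℤ), 0, 0, (n : ℤ)) ≤ n := by
  have h := wordLen_le_length (S := S1) (l := List.replicate n (1, 0, 0, 1))
    fun a ha => by simp [List.eq_of_mem_replicate ha, S1]
  simpa [evalWord_replicate (g := (1, 0, 0, 1)) (by simp)] using h

lemma add_sqrt_le_wordLen_S2 (n : ℕ) :
    (n : ℝ) + √n ≤ wordLen S2 ((n : ℤ), 0, 0, (n : ℤ)) := by
  obtain ⟨l, hl, hγ, hlen⟩ :=
    exists_word_length_eq_wordLen (exists_word_S2 ((n : ℤ), 0, 0, (n : ℤ)))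
  have := abs_fst_add_sqrt_le_length_of_forall_mem_S2 hl
  rw [hγ, hlen] at this
  simpa using this

lemma sqrt_le_abs_wordLen_S1_sub_wordLen_S2 (n : ℕ) :
    √n ≤ |(wordLen S1 ((n : ℤ), 0, 0, (n : ℤ)) : ℝ) - wordLen S2 ((n : ℤ), 0, 0, (n : ℤ))| := by
  have h1 : (wordLen S1 ((n : ℤ), 0, 0, (n : ℤ)) : ℝ) ≤ n := by exact_mod_cast wordLen_S1_le n
  have h2 := add_sqrt_le_wordLen_S2 n
  rw [abs_sub_comm, abs_of_nonneg (by linarith [Real.sqrt_nonneg n])]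
  linarith

/-- There exist two finite symmetric generating sets `S₁, S₂` of
`Γ = H₃(ℤ) × ℤ` whose word metrics `ρ₁, ρ₂` are asymptotic
(`ρ₁(id,γ)/ρ₂(id,γ) → 1` as `γ → ∞`) but not at bounded distance; in fact
`|ρ₁(id,γ_n) − ρ₂(id,γ_n)| ≥ c√n` along `γ_n = (n;0,0,n)`. This disproves the
Burago–Margulis conjecture. -/
theorem burago_margulis_counterexample :
    ∃ T₁ T₂ : Set Γ4,
      T₁.Finite ∧ T₂.Finite ∧
      (∀ a ∈ T₁, ginv a ∈ T₁) ∧ (∀ a ∈ T₂, ginv a ∈ T₂) ∧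
      (∀ γ : Γ4, ∃ l : List Γ4, (∀ a ∈ l, a ∈ T₁) ∧ l.foldl gmul gone = γ) ∧
      (∀ γ : Γ4, ∃ l : List Γ4, (∀ a ∈ l, a ∈ T₂) ∧ l.foldl gmul gone = γ) ∧
      Tendsto (fun γ : Γ4 => (wordLen T₁ γ : ℝ) / (wordLen T₂ γ : ℝ))
        Filter.cofinite (nhds 1) ∧
      (∀ C : ℝ, ∃ γ : Γ4, C < |(wordLen T₁ γ : ℝ) - (wordLen T₂ γ : ℝ)|) ∧
      ∃ c : ℝ, 0 < c ∧ ∃ N : ℕ, ∀ n : ℕ, N ≤ n →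
        c * Real.sqrt n ≤
          |(wordLen T₁ ((n : ℤ), 0, 0, (n : ℤ)) : ℝ) -
            (wordLen T₂ ((n : ℤ), 0, 0, (n : ℤ)) : ℝ)| := by
  have hS2 : S2.Finite := by simp [S2]
  have hρ₂ := tendsto_wordLen_cofinite_atTop hS2 exists_word_S2
  have hratio : Tendsto (fun γ => (wordLen S1 γ : ℝ) / wordLen S2 γ) cofinite (nhds 1) :=
    tendsto_div_nhds_one_of_abs_sub_le hρ₂ <| (hρ₂.eventually_ge_atTop 1).mono fun γ hγ =>
      abs_wordLen_S1_sub_wordLen_S2_le (by exact_mod_cast hγ)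
  have hunbounded (C : ℝ) : ∃ γ : Γ4, C < |(wordLen S1 γ : ℝ) - wordLen S2 γ| := by
    obtain ⟨n, hn⟩ :=
      ((Real.tendsto_sqrt_atTop.comp tendsto_natCast_atTop_atTop).eventually_gt_atTop C).exists
    exact ⟨_, hn.trans_le (sqrt_le_abs_wordLen_S1_sub_wordLen_S2 n)⟩
  exact ⟨S1, S2, by simp [S1], hS2, ginv_mem_S1, ginv_mem_S2, exists_word_S1, exists_word_S2,
    hratio, hunbounded, 1, one_pos, 0, fun n _ => by
      simpa using sqrt_le_abs_wordLen_S1_sub_wordLen_S2 n⟩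
end

section
/- Let Γ be a finitely generated group generated by a finite symmetric set S containing the identity, and suppose there exist constants c > 0, d ≥ 1, and 0 < α ≤ 1 with |S^n| = c·n^d + O(n^{d−α}). Then the spheres satisfy |S^n \ S^{n−1}| = O(n^{d−α}), and moreover |S^n \ S^{n−1}| ≥ C₁ n^{d−1} for some constant C₁ > 0 and all n. -/
open Pointwise Asymptotics Filter

/-!
The upper bound comes from telescoping: `|S^n \ S^(n-1)| = |S^n| - |S^(n-1)|`, and
`c (n^d - (n-1)^d) = O(n^(d-1))` by Bernoulli's inequality.

For the lower bound, balls grow without bound, so every sphere is nonempty. Pick `w` of word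
length exactly `2n` and a path `1 = p₀, p₁, …, p₂ₙ = w` with steps in `S`. For `g ∈ S^n` the
length of `g pₖ` changes by at most one per step, starts `≤ n` and ends `≥ n`, so some `g pₖ` lies
on the `n`-sphere. Hence `S^n` is covered by `2n + 1` translates of the `n`-sphere, and
`|S^n| ≥ (c/2) n^d` for large `n` gives the lower bound there; the finitely many small `n` are
absorbed into the constant because spheres are nonempty.
-/

namespace Finset
variable {Γ : Type*} [Group Γ] [DecidableEq Γ] {S : Finset Γ}

lemma exists_path_of_mem_pow (hone : (1 : Γ) ∈ S) {m : ℕ} {w : Γ} (hw : w ∈ S ^ m) :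
    ∃ p : ℕ → Γ, p 0 = 1 ∧ p m = w ∧ ∀ k, ∃ s ∈ S, p (k + 1) = p k * s := by
  induction m generalizing w with
  | zero =>
    exact ⟨fun _ => 1, rfl, (mem_one.1 (pow_zero S ▸ hw)).symm, fun _ => ⟨1, hone, by simp⟩⟩
  | succ m ih =>
    obtain ⟨u, hu, s, hs, rfl⟩ := mem_mul.1 (pow_succ S m ▸ hw)
    obtain ⟨p, hp0, hpm, hstep⟩ := ih hu
    refine ⟨fun k => if k ≤ m then p k else u * s, by simp [hp0], by simp, fun k => ?_⟩
    rcases lt_trichotomy k m with hk | rfl | hk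
    · simpa [hk.le, Nat.succ_le_of_lt hk] using hstep k
    · exact ⟨s, hs, by simp [hpm]⟩
    · exact ⟨1, hone, by simp [hk.not_ge, (hk.trans k.lt_succ_self).not_ge]⟩

lemma exists_mul_mem_sphere {n m : ℕ} (hn : 1 ≤ n) {g : Γ}
    (hg : g ∈ S ^ n) {p : ℕ → Γ} (hp0 : p 0 = 1) (hstep : ∀ k, ∃ s ∈ S, p (k + 1) = p k * s)
    (hm : g * p m ∉ S ^ (n - 1)) : ∃ k ≤ m, g * p k ∈ S ^ n \ S ^ (n - 1) := by
  -- the first `k` with `g * p k ∉ S ^ (n - 1)` is one step away from `S ^ (n - 1)`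
  have hex : ∃ k, g * p k ∉ S ^ (n - 1) := ⟨m, hm⟩
  refine ⟨Nat.find hex, Nat.find_min' hex hm, mem_sdiff.2 ⟨?_, Nat.find_spec hex⟩⟩
  rcases h : Nat.find hex with _ | k
  · simpa [hp0] using hg
  · have hk : g * p k ∈ S ^ (n - 1) := not_not.1 (Nat.find_min hex (by omega))
    obtain ⟨s, hs, hps⟩ := hstep k
    rw [hps, ← mul_assoc, ← Nat.sub_add_cancel hn, pow_succ]
    exact mul_mem_mul hk hs

lemma card_pow_le_mul_card_sphere (hsym : S⁻¹ = S) (hone : (1 : Γ) ∈ S) {n : ℕ} (hn : 1 ≤ n)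
    (hw : (S ^ (2 * n) \ S ^ (2 * n - 1)).Nonempty) :
    #(S ^ n) ≤ (2 * n + 1) * #(S ^ n \ S ^ (n - 1)) := by
  obtain ⟨w, hw⟩ := hw
  obtain ⟨p, hp0, hpw, hstep⟩ := exists_path_of_mem_pow hone (mem_sdiff.1 hw).1
  have hcover : S ^ n ⊆ (S ^ n \ S ^ (n - 1)) * (range (2 * n + 1)).image fun k => (p k)⁻¹ := by
    intro g hg
    have hfar : g * p (2 * n) ∉ S ^ (n - 1) := fun h => (mem_sdiff.1 hw).2 <| by
      have hginv : g⁻¹ ∈ S ^ n := by rwa [← hsym, inv_pow, mem_inv', inv_inv]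
      rw [← hpw, show 2 * n - 1 = n + (n - 1) by omega, pow_add]
      simpa using mul_mem_mul hginv h
    obtain ⟨k, hk, hgk⟩ := exists_mul_mem_sphere hn hg hp0 hstep hfar
    exact mem_mul.2 ⟨g * p k, hgk, (p k)⁻¹, mem_image_of_mem _ (mem_range.2 (by omega)), by simp⟩
  calc #(S ^ n) ≤ #(S ^ n \ S ^ (n - 1)) * #(range (2 * n + 1)) :=
        (card_le_card hcover).trans (card_mul_le.trans (Nat.mul_le_mul_left _ card_image_le))
    _ = _ := by rw [card_range, mul_comm]

lemma cast_card_sphere (hone : (1 : Γ) ∈ S) (n : ℕ) :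
    (#(S ^ n \ S ^ (n - 1)) : ℝ) = #(S ^ n) - #(S ^ (n - 1)) := by
  have hsub := pow_subset_pow_right hone (n.sub_le 1)
  rw [card_sdiff_of_subset hsub, Nat.cast_sub (card_le_card hsub)]

lemma infinite_closure_of_tendsto_card_pow (h : Tendsto (fun n => #(S ^ n)) atTop atTop) :
    (Subgroup.closure (S : Set Γ) : Set Γ).Infinite := by
  intro hfin
  obtain ⟨n, hn⟩ := (h.eventually_gt_atTop #hfin.toFinset).exists
  refine hn.not_ge (card_le_card fun x hx => hfin.mem_toFinset.2 ?_)
  exact Subgroup.pow_subset Subgroup.subset_closure (by simpa [← coe_pow] using hx)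

lemma sphere_nonempty (hone : (1 : Γ) ∈ S) (hS : (Subgroup.closure (S : Set Γ) : Set Γ).Infinite)
    {n : ℕ} (hn : 1 ≤ n) : (S ^ n \ S ^ (n - 1)).Nonempty :=
  sdiff_nonempty.2 (pow_right_strictMono hone hS (Nat.sub_lt hn one_pos)).2

end Finset

lemma rpow_sub_rpow_sub_one_le {x d : ℝ} (hx : 1 ≤ x) (hd : 1 ≤ d) :
    x ^ d - (x - 1) ^ d ≤ d * x ^ (d - 1) := by
  have hx0 : 0 < x := by linarith
  have hbern : 1 + d * -x⁻¹ ≤ (1 + -x⁻¹) ^ d :=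
    one_add_mul_self_le_rpow_one_add (by simpa using inv_le_one_of_one_le₀ hx) hd
  have hfact : x - 1 = x * (1 + -x⁻¹) := by field_simp; ring
  rw [hfact, Real.mul_rpow hx0.le (by simpa using inv_le_one_of_one_le₀ hx),
    Real.rpow_sub_one hx0.ne']
  have hexpand : x ^ d * (1 + d * -x⁻¹) = x ^ d - d * (x ^ d / x) := by ring
  linarith [mul_le_mul_of_nonneg_left hbern (Real.rpow_nonneg hx0.le d)]

lemma isBigO_natCast_rpow_rpow {a b : ℝ} (hab : a ≤ b) :
    (fun n : ℕ => (n : ℝ) ^ a) =O[atTop] fun n : ℕ => (n : ℝ) ^ b := by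
  refine IsBigO.of_bound 1 ?_
  filter_upwards [eventually_ge_atTop 1] with n hn
  rw [one_mul, Real.norm_of_nonneg (by positivity), Real.norm_of_nonneg (by positivity)]
  exact Real.rpow_le_rpow_of_exponent_le (by exact_mod_cast hn) hab

lemma isLittleO_natCast_rpow_rpow {a b : ℝ} (hab : a < b) :
    (fun n : ℕ => (n : ℝ) ^ a) =o[atTop] fun n : ℕ => (n : ℝ) ^ b := by
  have h0 : Tendsto (fun n : ℕ => (n : ℝ) ^ (-(b - a))) atTop (nhds 0) :=
    (tendsto_rpow_neg_atTop (sub_pos.2 hab)).comp tendsto_natCast_atTop_atTop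
  refine (((isLittleO_one_iff ℝ).2 h0).mul_isBigO (isBigO_refl _ _)).congr' ?_
    (Eventually.of_forall fun n => one_mul _)
  filter_upwards [eventually_gt_atTop 0] with n hn
  rw [← Real.rpow_add (by positivity)]
  ring_nf

lemma eventually_le_of_sub_rpow_isBigO {f : ℕ → ℝ} {c d e : ℝ} (hc : 0 < c) (hed : e < d)
    (hf : (fun n : ℕ => f n - c * (n : ℝ) ^ d) =O[atTop] fun n : ℕ => (n : ℝ) ^ e) :
    ∀ᶠ n : ℕ in atTop, c / 2 * (n : ℝ) ^ d ≤ f n := by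
  filter_upwards [(hf.trans_isLittleO (isLittleO_natCast_rpow_rpow hed)).bound (half_pos hc)]
    with n hn
  rw [Real.norm_eq_abs, Real.norm_of_nonneg (by positivity)] at hn
  linarith [neg_abs_le (f n - c * (n : ℝ) ^ d)]

lemma isBigO_sub_pred_of_sub_rpow_isBigO {f : ℕ → ℝ} {c d e : ℝ} (hd : 1 ≤ d) (he : 0 ≤ e)
    (hde : d - 1 ≤ e)
    (hf : (fun n : ℕ => f n - c * (n : ℝ) ^ d) =O[atTop] fun n : ℕ => (n : ℝ) ^ e) :
    (fun n : ℕ => f n - f (n - 1)) =O[atTop] fun n : ℕ => (n : ℝ) ^ e := by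
  have hpred : (fun n : ℕ => f (n - 1) - c * ((n - 1 : ℕ) : ℝ) ^ d)
      =O[atTop] fun n : ℕ => (n : ℝ) ^ e := by
    refine (hf.comp_tendsto (tendsto_sub_atTop_nat 1)).trans <|
      IsBigO.of_bound 1 <| Eventually.of_forall fun n => ?_
    rw [Function.comp_apply, one_mul, Real.norm_of_nonneg (by positivity),
      Real.norm_of_nonneg (by positivity)]
    exact Real.rpow_le_rpow (Nat.cast_nonneg _) (Nat.cast_le.2 (n.sub_le 1)) he
  have hdiff : (fun n : ℕ => c * ((n : ℝ) ^ d - ((n - 1 : ℕ) : ℝ) ^ d))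
      =O[atTop] fun n : ℕ => (n : ℝ) ^ (d - 1) := by
    refine IsBigO.of_bound (|c| * d) ?_
    filter_upwards [eventually_ge_atTop 1] with n hn
    have hn' : (1 : ℝ) ≤ n := by exact_mod_cast hn
    rw [Nat.cast_sub hn, Nat.cast_one, norm_mul, Real.norm_eq_abs,
      Real.norm_of_nonneg (sub_nonneg.2 (Real.rpow_le_rpow (by linarith) (by linarith)
        (by linarith))), Real.norm_of_nonneg (by positivity), mul_assoc]
    exact mul_le_mul_of_nonneg_left (rpow_sub_rpow_sub_one_le hn' hd) (abs_nonneg c)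
  exact ((hf.sub hpred).add (hdiff.trans (isBigO_natCast_rpow_rpow hde))).congr_left
    fun n => by ring

lemma exists_pos_mul_le_of_eventually {f g : ℕ → ℝ} {C : ℝ} (hC : 0 < C) (hg : ∀ n, 0 ≤ g n)
    (hf : ∀ n, 1 ≤ n → 0 < f n) (h : ∀ᶠ n in atTop, C * g n ≤ f n) :
    ∃ C₁, 0 < C₁ ∧ ∀ n, 1 ≤ n → C₁ * g n ≤ f n := by
  obtain ⟨N, hN⟩ := eventually_atTop.1 h
  have hsmall : ∀ᶠ ε in nhds (0 : ℝ), ε ≤ C ∧ ∀ n ∈ Finset.Ico 1 N, ε * g n < f n := by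
    refine (eventually_le_nhds hC).and ((Finset.eventually_all _).2 fun n hn => ?_)
    exact ((continuous_mul_const (g n)).tendsto' 0 0 (zero_mul _)).eventually
      (eventually_lt_nhds (hf n (Finset.mem_Ico.1 hn).1))
  obtain ⟨ε, ⟨hεC, hεf⟩, hε⟩ :=
    ((hsmall.filter_mono nhdsWithin_le_nhds).and (self_mem_nhdsWithin (s := Set.Ioi 0))).exists
  refine ⟨ε, hε, fun n hn => ?_⟩
  rcases lt_or_ge n N with hnN | hnN
  · exact (hεf n (Finset.mem_Ico.2 ⟨hn, hnN⟩)).le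
  · exact (mul_le_mul_of_nonneg_right hεC (hg n)).trans (hN n hnN)

theorem sphere_volume_bounds_general {Γ : Type*} [Group Γ] [DecidableEq Γ]
    (S : Finset Γ) (hsym : S⁻¹ = S) (hone : (1 : Γ) ∈ S)
    (c d α : ℝ) (hc : 0 < c) (hd : 1 ≤ d) (hα : 0 < α) (hα1 : α ≤ 1)
    (hball : (fun n : ℕ => ((S ^ n).card : ℝ) - c * (n : ℝ) ^ d)
      =O[atTop] fun n : ℕ => (n : ℝ) ^ (d - α)) :
    ((fun n : ℕ => (((S ^ n) \ (S ^ (n - 1))).card : ℝ))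
        =O[atTop] fun n : ℕ => (n : ℝ) ^ (d - α)) ∧
    ∃ C₁ : ℝ, 0 < C₁ ∧ ∀ n : ℕ, 1 ≤ n →
      C₁ * (n : ℝ) ^ (d - 1) ≤ (((S ^ n) \ (S ^ (n - 1))).card : ℝ) := by
  have hlarge := eventually_le_of_sub_rpow_isBigO hc (by linarith : d - α < d) hball
  have hinf : (Subgroup.closure (S : Set Γ) : Set Γ).Infinite := by
    refine Finset.infinite_closure_of_tendsto_card_pow <| tendsto_natCast_atTop_iff.1 <|
      tendsto_atTop_mono' atTop hlarge ?_
    exact ((tendsto_rpow_atTop (by linarith)).comp tendsto_natCast_atTop_atTop).const_mul_atTop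
      (by positivity)
  have hne n (hn : 1 ≤ n) := Finset.sphere_nonempty hone hinf hn
  refine ⟨(isBigO_sub_pred_of_sub_rpow_isBigO hd (by linarith) (by linarith) hball).congr_left
      fun n => (Finset.cast_card_sphere hone n).symm,
    exists_pos_mul_le_of_eventually (C := c / 6) (by positivity) (fun n => by positivity)
      (fun n hn => by exact_mod_cast (hne n hn).card_pos) ?_⟩
  filter_upwards [hlarge, eventually_ge_atTop 1] with n hball_n hn
  have hcover : ((S ^ n).card : ℝ) ≤ (2 * n + 1) * (S ^ n \ S ^ (n - 1)).card := by
    exact_mod_cast Finset.card_pow_le_mul_card_sphere hsym hone hn (hne (2 * n) (by omega))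
  have hn₀ : (0 : ℝ) < n := by exact_mod_cast hn
  refine le_of_mul_le_mul_left ?_ (by positivity : (0 : ℝ) < 3 * n)
  calc 3 * n * (c / 6 * (n : ℝ) ^ (d - 1)) = c / 2 * (n : ℝ) ^ d := by
        rw [Real.rpow_sub_one hn₀.ne']; field_simp; ring
    _ ≤ (S ^ n).card := hball_n
    _ ≤ (2 * n + 1) * (S ^ n \ S ^ (n - 1)).card := hcover
    _ ≤ 3 * n * (S ^ n \ S ^ (n - 1)).card := by
        gcongr; linarith [(Nat.one_le_cast (α := ℝ)).2 hn]

/-- **Volume of spheres from volume of balls.** Let `Γ` be generated by a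
finite symmetric set `S` containing the identity, and suppose
`|S^n| = c·n^d + O(n^{d−α})` with `c > 0`, `d ≥ 1`, `0 < α ≤ 1`. Then the
spheres satisfy `|S^n \ S^{n−1}| = O(n^{d−α})` and `|S^n \ S^{n−1}| ≥ C₁·n^{d−1}`
for some `C₁ > 0` and all `n ≥ 1`. -/
theorem sphere_volume_bounds {Γ : Type*} [Group Γ] [DecidableEq Γ]
    (S : Finset Γ) (hsym : S⁻¹ = S) (hone : (1 : Γ) ∈ S)
    (hgen : Subgroup.closure (S : Set Γ) = ⊤)
    (c d α : ℝ) (hc : 0 < c) (hd : 1 ≤ d) (hα : 0 < α) (hα1 : α ≤ 1)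
    (hball : (fun n : ℕ => ((S ^ n).card : ℝ) - c * (n : ℝ) ^ d)
      =O[atTop] fun n : ℕ => (n : ℝ) ^ (d - α)) :
    ((fun n : ℕ => (((S ^ n) \ (S ^ (n - 1))).card : ℝ))
        =O[atTop] fun n : ℕ => (n : ℝ) ^ (d - α)) ∧
    ∃ C₁ : ℝ, 0 < C₁ ∧ ∀ n : ℕ, 1 ≤ n →
      C₁ * (n : ℝ) ^ (d - 1) ≤ (((S ^ n) \ (S ^ (n - 1))).card : ℝ) :=
  sphere_volume_bounds_general S hsym hone c d α hc hd hα hα1 hball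
end

section
/- In the ℓ¹ unit ball of ℝ^k, any collection of 2k points that are pairwise at ℓ¹-distance exactly 2 must be the set of 2k vertices {±e₁,…,±e_k} of the ball. -/
/-- The ℓ¹ norm on `ℝ^k`. -/
noncomputable def l1Norm {k : ℕ} (x : Fin k → ℝ) : ℝ := ∑ i, |x i|

/-- **Extreme points of the ℓ¹ ball.** In the closed unit ball of `ℝ^k` with the
ℓ¹ norm, any collection of `2k` points that are pairwise at ℓ¹-distance exactly
`2` must be the set of `2k` vertices `{±e₁, …, ±e_k}`. -/
theorem l1_extreme_points {k : ℕ} (hk : 1 ≤ k)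
    (g : Fin (2 * k) → (Fin k → ℝ))
    (hball : ∀ i, l1Norm (g i) ≤ 1)
    (hdist : ∀ i j, i ≠ j → l1Norm (g i - g j) = 2) :
    Set.range g =
      {x : Fin k → ℝ | ∃ i : Fin k,
        x = Pi.single i (1 : ℝ) ∨ x = -Pi.single i (1 : ℝ)} := by
  -- injectivity of g
  have hinj : Function.Injective g := by
    intro i j hij
    by_contra hne
    have h := hdist i j hne
    simp [l1Norm, hij] at h
  -- each g i has norm exactly 1
  have htri : ∀ i j, l1Norm (g i - g j) ≤ l1Norm (g i) + l1Norm (g j) := by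
    intro i j
    simp only [l1Norm, ← Finset.sum_add_distrib]
    exact Finset.sum_le_sum fun c _ => abs_sub _ _
  have hnorm : ∀ i, l1Norm (g i) = 1 := by
    intro i
    have h2 : (1 : ℕ) < 2 * k := by omega
    obtain ⟨j, hji⟩ : ∃ j : Fin (2 * k), j ≠ i := by
      rcases eq_or_ne i ⟨0, by omega⟩ with h | h
      · exact ⟨⟨1, h2⟩, by simp [h, Fin.ext_iff]⟩
      · exact ⟨⟨0, by omega⟩, fun hc => h (hc ▸ rfl)⟩
    have hd := hdist i j (fun hc => hji (hc ▸ rfl))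
    have := htri i j
    have h1 := hball i
    have h2 := hball j
    rw [hd] at this
    linarith
  -- termwise triangle equality
  have heq : ∀ i j, i ≠ j → ∀ c, |g i c - g j c| = |g i c| + |g j c| := by
    intro i j hij
    have hd := hdist i j hij
    have hsum : ∑ c, |g i c - g j c| = ∑ c, (|g i c| + |g j c|) := by
      rw [Finset.sum_add_distrib]
      have := hnorm i; have := hnorm j
      simp only [l1Norm] at *
      have : (g i - g j) = fun c => g i c - g j c := rfl
      simp only [l1Norm, Pi.sub_apply] at hd
      linarith
    have hle : ∀ c ∈ Finset.univ, |g i c - g j c| ≤ |g i c| + |g j c| :=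
      fun c _ => abs_sub _ _
    have := (Finset.sum_eq_sum_iff_of_le hle).mp hsum
    intro c
    exact this c (Finset.mem_univ c)
  -- sign opposition
  have hsign : ∀ i j, i ≠ j → ∀ c, g i c * g j c ≤ 0 := by
    intro i j hij c
    have h := heq i j hij c
    have h2 : (g i c - g j c) ^ 2 = (|g i c| + |g j c|) ^ 2 := by
      rw [← h, sq_abs]
    nlinarith [abs_nonneg (g i c * g j c), abs_mul (g i c) (g j c),
      sq_abs (g i c), sq_abs (g j c), abs_nonneg (g i c), abs_nonneg (g j c)]
  -- each coordinate entry is at most 1 in abs value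
  have habs : ∀ i c, |g i c| ≤ 1 := by
    intro i c
    have : |g i c| ≤ ∑ d, |g i d| :=
      Finset.single_le_sum (f := fun d => |g i d|) (fun d _ => abs_nonneg _) (Finset.mem_univ c)
    calc |g i c| ≤ l1Norm (g i) := this
    _ = 1 := hnorm i
  -- positive and negative index sets at a coordinate
  set P : Fin k → Finset (Fin (2 * k)) :=
    fun c => Finset.univ.filter (fun i => 0 < g i c) with hP
  set N : Fin k → Finset (Fin (2 * k)) :=
    fun c => Finset.univ.filter (fun i => g i c < 0) with hN
  have hPcard : ∀ c, (P c).card ≤ 1 := by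
    intro c
    refine Finset.card_le_one.mpr fun a ha b hb => ?_
    by_contra hab
    have ha' := (Finset.mem_filter.mp ha).2
    have hb' := (Finset.mem_filter.mp hb).2
    have := hsign a b hab c
    nlinarith
  have hNcard : ∀ c, (N c).card ≤ 1 := by
    intro c
    refine Finset.card_le_one.mpr fun a ha b hb => ?_
    by_contra hab
    have ha' := (Finset.mem_filter.mp ha).2
    have hb' := (Finset.mem_filter.mp hb).2
    have := hsign a b hab c
    nlinarith
  have hPN : ∀ c, Disjoint (P c) (N c) := by
    intro c
    refine Finset.disjoint_left.mpr fun a ha hb => ?_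
    have ha' := (Finset.mem_filter.mp ha).2
    have hb' := (Finset.mem_filter.mp hb).2
    linarith
  -- reduce coordinate sums to P ∪ N
  have hsupp : ∀ c, ∑ i, |g i c| = ∑ i ∈ P c ∪ N c, |g i c| := by
    intro c
    refine (Finset.sum_subset (Finset.subset_univ _) fun i _ hi => ?_).symm
    simp only [Finset.mem_union, Finset.mem_filter, Finset.mem_univ, true_and, hP, hN,
      not_or, not_lt] at hi
    have : g i c = 0 := le_antisymm hi.1 hi.2
    simp [this]
  -- coordinate sum bound
  have hSle : ∀ c, ∑ i, |g i c| ≤ 2 := by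
    intro c
    rw [hsupp c]
    calc ∑ i ∈ P c ∪ N c, |g i c| ≤ ∑ i ∈ P c ∪ N c, 1 :=
          Finset.sum_le_sum fun i _ => habs i c
    _ = (P c ∪ N c).card := by simp
    _ ≤ ((P c).card + (N c).card : ℕ) := by exact_mod_cast Finset.card_union_le _ _
    _ ≤ 2 := by
        have h1 := hPcard c; have h2 := hNcard c
        have : (P c).card + (N c).card ≤ 2 := by omega
        exact_mod_cast this
  -- total sum is 2k, hence each coordinate sum is exactly 2
  have htot : ∑ c, ∑ i, |g i c| = 2 * (k : ℝ) := by
    rw [Finset.sum_comm]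
    have : ∀ i : Fin (2 * k), ∑ c, |g i c| = 1 := fun i => hnorm i
    rw [Finset.sum_congr rfl fun i _ => this i]
    simp
  have hS2 : ∀ c, ∑ i, |g i c| = 2 := by
    intro c
    by_contra hne
    have hlt : ∑ i, |g i c| < 2 := lt_of_le_of_ne (hSle c) hne
    have : ∑ c, ∑ i, |g i c| < ∑ c : Fin k, (2 : ℝ) := by
      refine Finset.sum_lt_sum (fun d _ => hSle d) ⟨c, Finset.mem_univ c, hlt⟩
    rw [htot] at this
    simp at this
    linarith
  -- extract a +1 and a -1 at each coordinate
  have hvert : ∀ c, (∃ i, g i c = 1) ∧ (∃ j, g j c = -1) := by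
    intro c
    have h2 := hS2 c
    rw [hsupp c, Finset.sum_union (hPN c)] at h2
    have hPle : ∑ i ∈ P c, |g i c| ≤ 1 := by
      calc ∑ i ∈ P c, |g i c| ≤ ∑ i ∈ P c, 1 := Finset.sum_le_sum fun i _ => habs i c
      _ = ((P c).card : ℝ) := by simp
      _ ≤ 1 := by exact_mod_cast hPcard c
    have hNle : ∑ i ∈ N c, |g i c| ≤ 1 := by
      calc ∑ i ∈ N c, |g i c| ≤ ∑ i ∈ N c, 1 := Finset.sum_le_sum fun i _ => habs i c
      _ = ((N c).card : ℝ) := by simp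
      _ ≤ 1 := by exact_mod_cast hNcard c
    have hPeq : ∑ i ∈ P c, |g i c| = 1 := by linarith
    have hNeq : ∑ i ∈ N c, |g i c| = 1 := by linarith
    constructor
    · obtain ⟨p, hp⟩ : (P c).Nonempty := by
        rw [Finset.nonempty_iff_ne_empty]
        intro h; rw [h] at hPeq; simp at hPeq
      have hPsing : P c = {p} :=
        Finset.eq_singleton_iff_unique_mem.mpr ⟨hp, fun b hb =>
          Finset.card_le_one.mp (hPcard c) b hb p hp⟩
      rw [hPsing, Finset.sum_singleton] at hPeq
      have hppos := (Finset.mem_filter.mp hp).2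
      exact ⟨p, by rw [abs_of_pos hppos] at hPeq; exact hPeq⟩
    · obtain ⟨p, hp⟩ : (N c).Nonempty := by
        rw [Finset.nonempty_iff_ne_empty]
        intro h; rw [h] at hNeq; simp at hNeq
      have hNsing : N c = {p} :=
        Finset.eq_singleton_iff_unique_mem.mpr ⟨hp, fun b hb =>
          Finset.card_le_one.mp (hNcard c) b hb p hp⟩
      rw [hNsing, Finset.sum_singleton] at hNeq
      have hpneg := (Finset.mem_filter.mp hp).2
      exact ⟨p, by rw [abs_of_neg hpneg] at hNeq; linarith⟩
  -- a vector with |entry| = 1 at c is ±e_c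
  have honec : ∀ (i : Fin (2 * k)) (c : Fin k), |g i c| = 1 →
      ∀ d, d ≠ c → g i d = 0 := by
    intro i c h1 d hdc
    have hsum1 : ∑ e, |g i e| = 1 := hnorm i
    have hrest : ∑ e ∈ Finset.univ.erase c, |g i e| = 0 := by
      have h := Finset.sum_erase_add Finset.univ (fun e => |g i e|) (Finset.mem_univ c)
      have h2 : ∑ x ∈ Finset.univ.erase c, |g i x| + |g i c| = ∑ x, |g i x| := h
      linarith
    have := (Finset.sum_eq_zero_iff_of_nonneg fun e _ => abs_nonneg (g i e)).mp hrest
    have hd := this d (Finset.mem_erase.mpr ⟨hdc, Finset.mem_univ d⟩)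
    exact abs_eq_zero.mp hd
  have hpos : ∀ (i : Fin (2 * k)) (c : Fin k), g i c = 1 → g i = Pi.single c 1 := by
    intro i c h1
    funext d
    rcases eq_or_ne d c with rfl | hdc
    · simp [h1]
    · rw [honec i c (by rw [h1]; norm_num) d hdc, Pi.single_eq_of_ne hdc]
  have hneg : ∀ (i : Fin (2 * k)) (c : Fin k), g i c = -1 → g i = -Pi.single c 1 := by
    intro i c h1
    funext d
    rcases eq_or_ne d c with rfl | hdc
    · simp [h1]
    · rw [honec i c (by rw [h1]; norm_num) d hdc, Pi.neg_apply, Pi.single_eq_of_ne hdc, neg_zero]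
  -- the vertex set is contained in range g
  set V : Set (Fin k → ℝ) := {x : Fin k → ℝ | ∃ i : Fin k,
      x = Pi.single i (1 : ℝ) ∨ x = -Pi.single i (1 : ℝ)} with hV
  have hVsub : V ⊆ Set.range g := by
    rintro x ⟨c, hc | hc⟩
    · obtain ⟨i, hi⟩ := (hvert c).1
      exact ⟨i, by rw [hpos i c hi, hc]⟩
    · obtain ⟨j, hj⟩ := (hvert c).2
      exact ⟨j, by rw [hneg j c hj, hc]⟩
  -- cardinalities
  have hVeq : V = Set.range (fun c : Fin k => Pi.single c (1 : ℝ)) ∪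
      Set.range (fun c : Fin k => -Pi.single c (1 : ℝ)) := by
    ext x
    simp only [hV, Set.mem_setOf_eq, Set.mem_union, Set.mem_range]
    constructor
    · rintro ⟨i, h | h⟩
      · exact Or.inl ⟨i, h.symm⟩
      · exact Or.inr ⟨i, h.symm⟩
    · rintro (⟨i, h⟩ | ⟨i, h⟩)
      · exact ⟨i, Or.inl h.symm⟩
      · exact ⟨i, Or.inr h.symm⟩
  have hsinj : Function.Injective (fun c : Fin k => Pi.single c (1 : ℝ)) := by
    intro a b hab
    by_contra hne
    have hab' : (Pi.single a (1 : ℝ) : Fin k → ℝ) = Pi.single b (1 : ℝ) := hab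
    have : (Pi.single a (1 : ℝ) : Fin k → ℝ) a = (Pi.single b (1 : ℝ) : Fin k → ℝ) a :=
      congrFun hab' a
    rw [Pi.single_eq_same, Pi.single_eq_of_ne hne] at this
    norm_num at this
  have hninj : Function.Injective (fun c : Fin k => -Pi.single c (1 : ℝ)) := by
    intro a b hab
    apply hsinj
    simpa using congrArg Neg.neg hab
  have hdisj : Disjoint (Set.range (fun c : Fin k => Pi.single c (1 : ℝ)))
      (Set.range (fun c : Fin k => -Pi.single c (1 : ℝ))) := by
    rw [Set.disjoint_left]
    rintro x ⟨a, ha⟩ ⟨b, hb⟩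
    have ha' : (Pi.single a (1 : ℝ) : Fin k → ℝ) = x := ha
    have hb' : (-Pi.single b (1 : ℝ) : Fin k → ℝ) = x := hb
    have : (Pi.single a (1 : ℝ) : Fin k → ℝ) a = (-Pi.single b (1 : ℝ) : Fin k → ℝ) a :=
      congrFun (ha'.trans hb'.symm) a
    rw [Pi.single_eq_same] at this
    rcases eq_or_ne a b with rfl | hne
    · rw [Pi.neg_apply, Pi.single_eq_same] at this; norm_num at this
    · rw [Pi.neg_apply, Pi.single_eq_of_ne hne] at this; norm_num at this
  have hVcard : V.ncard = 2 * k := by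
    rw [hVeq, Set.ncard_union_eq hdisj (Set.finite_range _) (Set.finite_range _)]
    rw [← Set.image_univ, ← Set.image_univ,
      Set.ncard_image_of_injective _ hsinj, Set.ncard_image_of_injective _ hninj,
      Set.ncard_univ]
    simp [Nat.card_eq_fintype_card]
    ring
  have hRcard : (Set.range g).ncard = 2 * k := by
    rw [← Set.image_univ, Set.ncard_image_of_injective _ hinj, Set.ncard_univ]
    simp [Nat.card_eq_fintype_card]
  exact (Set.eq_of_subset_of_ncard_le hVsub (by rw [hVcard, hRcard])
    (Set.finite_range g)).symm
end
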